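/- arXiv:2008.04566 — 4 statements merged into one kernel-verified Lean document; each statement's English description precedes it below -/
import Mathlib

section
/- Let α ∈ ℝ^{e×d} (e ≥ d ≥ 1) be a non-degenerate coefficient matrix and let O be the associated optimization map on constraint matrices. Then for every constraint matrix m = (m̲, m̄) ∈ ℝ^{e×2}, the open polytope P^α_m is nonempty if and only if O(m)̲_i < O(m)̄_i for all i ∈ {1, …, e}. -/
open Set

/-- A constraint matrix: a pair of vectors of lower and upper bounds in `ℝ^e`. -/
abbrev CM (e : ℕ) := (Fin e → ℝ) × (Fin e → ℝ)

/-- The open polytope `P^α_m` associated with a coefficient matrix `α` and a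
constraint matrix `m`. -/
def PolySet {e d : ℕ} (α : Matrix (Fin e) (Fin d) ℝ) (m : CM e) : Set (Fin d → ℝ) :=
  {x | ∀ i, m.1 i < α.mulVec x i ∧ α.mulVec x i < m.2 i}

/-- A coefficient matrix is non-degenerate if its rows are nonzero and
pairwise non-proportional. -/
def Nondeg {e d : ℕ} (α : Matrix (Fin e) (Fin d) ℝ) : Prop :=
  (∀ i, α i ≠ 0) ∧ ∀ i j : Fin e, i ≠ j → ∀ c : ℝ, α i ≠ c • α j

/-- The set `Λ_i`: vectors `λ ∈ ℝ^e` supported on some `S` with `|S| ≤ d` which are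
the unique solution of `λᵀ α = α_i` with support in `S`. -/
def Lambda {e d : ℕ} (α : Matrix (Fin e) (Fin d) ℝ) (i : Fin e) : Set (Fin e → ℝ) :=
  {l | ∃ S : Finset (Fin e), S.card ≤ d ∧ (∀ k ∉ S, l k = 0) ∧
        (∀ j, ∑ k, l k * α k j = α i j) ∧
        ∀ l' : Fin e → ℝ, (∀ k ∉ S, l' k = 0) → (∀ j, ∑ k, l' k * α k j = α i j) → l' = l}

/-- `e̲_k(a,m)` -/
noncomputable def eLow {e : ℕ} (a : ℝ) (m : CM e) (k : Fin e) : ℝ :=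
  if 0 ≤ a then m.1 k else m.2 k

/-- `ē_k(a,m)` -/
noncomputable def eHigh {e : ℕ} (a : ℝ) (m : CM e) (k : Fin e) : ℝ :=
  if 0 ≤ a then m.2 k else m.1 k

/-- The optimized constraint matrix `O(m)`. -/
noncomputable def Opt {e d : ℕ} (α : Matrix (Fin e) (Fin d) ℝ) (m : CM e) : CM e :=
  (fun i => sSup ((fun l : Fin e → ℝ => ∑ k, l k * eLow (l k) m k) '' Lambda α i),
   fun i => sInf ((fun l : Fin e → ℝ => ∑ k, l k * eHigh (l k) m k) '' Lambda α i))

/-- Intersection constraint matrix `m ∩ m'`. -/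
def interCM {e : ℕ} (m m' : CM e) : CM e :=
  (fun i => max (m.1 i) (m'.1 i), fun i => min (m.2 i) (m'.2 i))

/-- Constraint-matrix inclusion `m ⊂ m'`. -/
def cmSub {e : ℕ} (m m' : CM e) : Prop := ∀ i, m'.1 i ≤ m.1 i ∧ m.2 i ≤ m'.2 i

/-!
If `x ∈ P^α_m` and `λ ∈ Λ_i`, then `λᵀα = α_i` gives `(αx)_i = ∑ λ_k (αx)_k`, and every term
lies strictly between `λ_k e̲_k(λ_k,m)` and `λ_k ē_k(λ_k,m)`; as `Λ_i` is finite,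
`O(m)̲_i < (αx)_i < O(m)̄_i`.

Conversely, `λ = e_i` shows `m̲ ≤ O(m)̲ < O(m)̄ ≤ m̄`. If `P^α_m` were empty, separating the open
box `∏ (m̲_k, m̄_k)` from the range of `α` (Hahn–Banach) gives a Farkas certificate: `w ≠ 0` with
`wᵀα = 0` and `∑ w_k ē_k(w_k,m) ≤ 0`. Take one of minimal support and `w_i ≠ 0`. The rows `α_k`,
`k ∈ supp w \ {i}`, are independent: a kernel vector `c` there could be followed from `w` until a
coordinate vanishes (the sum stays linear while the signs of `w` are kept), giving a smaller
certificate. So `λ = -w/w_i` with its `i`-th coordinate removed lies in `Λ_i`, and according to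
the sign of `w_i` it forces `O(m)̄_i ≤ m̲_i` or `m̄_i ≤ O(m)̲_i`, contradicting
`O(m)̲_i < O(m)̄_i`.
-/

open Finset Function Matrix

theorem LinearMap.eq_zero_of_forall_le {M : Type*} [AddCommGroup M] [Module ℝ M]
    {φ : M →ₗ[ℝ] ℝ} {u : ℝ} (h : ∀ x, u ≤ φ x) : φ = 0 := by
  refine LinearMap.ext fun x => ?_
  by_contra hx
  rw [LinearMap.zero_apply] at hx
  have := h (((u - 1) / φ x) • x)
  rw [map_smul, smul_eq_mul, div_mul_cancel₀ _ hx] at this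
  linarith

theorem Matrix.linearIndepOn_row_iff {m n R : Type*} [Fintype m] [CommRing R]
    (M : Matrix m n R) (s : Finset m) :
    LinearIndepOn R M.row s ↔ ∀ c : m → R, (∀ k ∉ s, c k = 0) → c ᵥ* M = 0 → c = 0 := by
  classical
  rw [linearIndepOn_finset_iff]
  constructor
  · intro h c hcs hc
    have hsum : ∑ k ∈ s, c k • M.row k = 0 := by
      rw [← hc, vecMul_eq_sum]
      exact sum_subset (subset_univ s) fun k _ hk => by rw [hcs k hk, zero_smul]
    funext k
    by_cases hk : k ∈ s
    · exact h c hsum k hk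
    · exact hcs k hk
  · intro h f hf k hk
    have hc := h (fun k => if k ∈ s then f k else 0) (fun k hk => if_neg hk)
      (by rw [vecMul_eq_sum]; simpa [ite_smul, Matrix.row] using hf)
    simpa [hk] using congrFun hc k

theorem exists_pos_add_mul_eq_zero_of_mul_neg {ι : Type*} [Fintype ι] {w c : ι → ℝ}
    (h : ∃ k, w k * c k < 0) :
    ∃ t > 0, (∀ k, 0 ≤ w k * (w k + t * c k)) ∧ ∃ k, w k ≠ 0 ∧ w k + t * c k = 0 := by
  classical
  set R := univ.filter fun k => w k * c k < 0
  have hmem : ∀ {k}, k ∈ R ↔ w k * c k < 0 := by simp [R]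
  have hc : ∀ {k}, k ∈ R → c k ≠ 0 := fun hk h0 => by simp [hmem, h0] at hk
  have hR : R.Nonempty := h.imp fun k hk => hmem.2 hk
  obtain ⟨k₀, hk₀, ht⟩ := exists_mem_eq_inf' hR fun k => -w k / c k
  set t := R.inf' hR fun k => -w k / c k
  have htpos : 0 < t := by
    refine (lt_inf'_iff hR).2 fun k hk => ?_
    have : -w k / c k = -(w k * c k) / c k ^ 2 := by field_simp
    rw [this]
    have := hc hk
    exact div_pos (neg_pos.2 (hmem.1 hk)) (by positivity)
  refine ⟨t, htpos, fun k => ?_, k₀, fun h0 => by simp [hmem, h0] at hk₀, ?_⟩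
  · by_cases hk : k ∈ R
    · have hle : t * (w k * c k) ≥ -w k / c k * (w k * c k) :=
        mul_le_mul_of_nonpos_right (inf'_le _ hk) (hmem.1 hk).le
      have : -w k / c k * (w k * c k) = -w k ^ 2 := by field_simp [hc hk]
      nlinarith
    · nlinarith [sq_nonneg (w k), not_lt.1 (mt hmem.2 hk)]
  · have := hc hk₀
    rw [ht]
    field_simp
    ring

section Polytope

variable {d e : ℕ}

section Bounds

variable {m : CM e} {k : Fin e}

theorem eHigh_mem_Icc (hm : m.1 k ≤ m.2 k) (a : ℝ) : eHigh a m k ∈ Icc (m.1 k) (m.2 k) := by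
  unfold eHigh
  split_ifs <;> constructor <;> linarith

theorem eHigh_eq_of_mul_pos {a b : ℝ} (h : 0 < a * b) : eHigh a m k = eHigh b m k := by
  have : 0 ≤ a ↔ 0 ≤ b := by
    rcases pos_and_pos_or_neg_and_neg_of_mul_pos h with ⟨ha, hb⟩ | ⟨ha, hb⟩
    · exact iff_of_true ha.le hb.le
    · exact iff_of_false ha.not_ge hb.not_ge
  simp only [eHigh, this]

theorem mul_eLow_eq (a : ℝ) : a * eLow a m k = -(-a * eHigh (-a) m k) := by
  rcases lt_trichotomy a 0 with ha | rfl | ha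
  · simp [eLow, eHigh, ha.not_ge, ha.le]
  · simp
  · simp [eLow, eHigh, ha.le, ha.not_ge]

theorem mul_le_mul_eHigh {y : ℝ} (h₁ : m.1 k ≤ y) (h₂ : y ≤ m.2 k) (a : ℝ) :
    a * y ≤ a * eHigh a m k := by
  unfold eHigh
  split_ifs <;> nlinarith

theorem mul_lt_mul_eHigh {y a : ℝ} (h₁ : m.1 k < y) (h₂ : y < m.2 k) (ha : a ≠ 0) :
    a * y < a * eHigh a m k := by
  unfold eHigh
  split_ifs with ha'
  · exact mul_lt_mul_of_pos_left h₂ (lt_of_le_of_ne ha' (Ne.symm ha))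
  · exact mul_lt_mul_of_neg_left h₁ (not_le.1 ha')

end Bounds

noncomputable def hiSum (m : CM e) (l : Fin e → ℝ) : ℝ := ∑ k, l k * eHigh (l k) m k

noncomputable def loSum (m : CM e) (l : Fin e → ℝ) : ℝ := ∑ k, l k * eLow (l k) m k

section Sums

variable {m : CM e}

theorem loSum_eq_neg_hiSum_neg (l : Fin e → ℝ) : loSum m l = -hiSum m (-l) := by
  simp [loSum, hiSum, mul_eLow_eq, sum_neg_distrib]

theorem hiSum_single (i : Fin e) : hiSum m (Pi.single i 1) = m.2 i := by
  rw [hiSum, Fintype.sum_eq_single i fun k hk => by simp [hk]]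
  simp [eHigh]

theorem loSum_single (i : Fin e) : loSum m (Pi.single i 1) = m.1 i := by
  rw [loSum, Fintype.sum_eq_single i fun k hk => by simp [hk]]
  simp [eLow]

theorem dotProduct_lt_hiSum {y l : Fin e → ℝ} (hy : ∀ k, m.1 k < y k ∧ y k < m.2 k)
    (hl : l ≠ 0) : l ⬝ᵥ y < hiSum m l := by
  obtain ⟨k, hk⟩ := Function.ne_iff.1 hl
  exact sum_lt_sum (fun k _ => mul_le_mul_eHigh (hy k).1.le (hy k).2.le _)
    ⟨k, mem_univ k, mul_lt_mul_eHigh (hy k).1 (hy k).2 hk⟩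

theorem loSum_lt_dotProduct {y l : Fin e → ℝ} (hy : ∀ k, m.1 k < y k ∧ y k < m.2 k)
    (hl : l ≠ 0) : loSum m l < l ⬝ᵥ y := by
  have := dotProduct_lt_hiSum hy (neg_ne_zero.2 hl)
  rw [loSum_eq_neg_hiSum_neg, neg_dotProduct] at *
  linarith

theorem hiSum_eq_dotProduct_of_mul_pos {v w : Fin e → ℝ} (h : ∀ k, v k ≠ 0 → 0 < w k * v k) :
    hiSum m v = v ⬝ᵥ fun k => eHigh (w k) m k := by
  refine sum_congr rfl fun k _ => ?_
  by_cases hv : v k = 0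
  · simp [hv]
  · exact congrArg _ (eHigh_eq_of_mul_pos (h k hv)).symm

theorem hiSum_update_smul {t : ℝ} (ht : 0 ≤ t) (w : Fin e → ℝ) (i : Fin e) :
    hiSum m (update (t • w) i 0) = t * (hiSum m w - w i * eHigh (w i) m i) := by
  have hscale : ∀ k, t * w k * eHigh (t * w k) m k = t * (w k * eHigh (w k) m k) := by
    intro k
    rcases ht.eq_or_lt with rfl | ht
    · simp
    by_cases hw : w k = 0
    · simp [hw]
    have hpos : 0 < t * w k * w k := by
      rw [mul_assoc]
      exact mul_pos ht (mul_self_pos.2 hw)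
    rw [eHigh_eq_of_mul_pos hpos, mul_assoc]
  rw [hiSum, hiSum, Fintype.sum_eq_add_sum_compl i, Fintype.sum_eq_add_sum_compl i, update_self,
    zero_mul, zero_add, add_sub_cancel_left, mul_sum]
  refine sum_congr rfl fun k hk => ?_
  rw [update_of_ne (by simpa using hk), Pi.smul_apply, smul_eq_mul, hscale]

end Sums

section Lambda

variable {α : Matrix (Fin e) (Fin d) ℝ} {i : Fin e} {l : Fin e → ℝ}

theorem vecMul_eq_of_mem_Lambda (hl : l ∈ Lambda α i) : l ᵥ* α = α i := by
  obtain ⟨S, -, -, hsum, -⟩ := hl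
  exact funext hsum

theorem mem_Lambda_of_linearIndepOn {S : Finset (Fin e)} (hS : LinearIndepOn ℝ α.row S)
    (hlS : ∀ k ∉ S, l k = 0) (hl : l ᵥ* α = α i) : l ∈ Lambda α i := by
  refine ⟨S, ?_, hlS, congrFun hl, fun l' hl'S hl' => ?_⟩
  · simpa using hS.fintype_card_le_finrank
  · refine sub_eq_zero.1 ((α.linearIndepOn_row_iff S).1 hS (l' - l) (fun k hk => ?_) ?_)
    · simp [hl'S k hk, hlS k hk]
    · rw [sub_vecMul, show l' ᵥ* α = α i from funext hl', hl, sub_self]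

theorem single_mem_Lambda (hαi : α i ≠ 0) : Pi.single i 1 ∈ Lambda α i := by
  refine mem_Lambda_of_linearIndepOn (S := {i}) ?_ (fun k hk => ?_) ?_
  · rw [coe_singleton, linearIndepOn_singleton_iff]
    exact hαi
  · exact Pi.single_eq_of_ne (by simpa using hk) 1
  · rw [single_one_vecMul]
    rfl

theorem Lambda_finite (α : Matrix (Fin e) (Fin d) ℝ) (i : Fin e) : (Lambda α i).Finite := by
  refine Set.Finite.subset (Set.finite_iUnion fun S : Finset (Fin e) => Set.Subsingleton.finite
    (s := {l : Fin e → ℝ | (∀ k ∉ S, l k = 0) ∧ (∀ j, ∑ k, l k * α k j = α i j) ∧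
      ∀ l' : Fin e → ℝ, (∀ k ∉ S, l' k = 0) → (∀ j, ∑ k, l' k * α k j = α i j) → l' = l}) ?_) ?_
  · rintro l₁ ⟨h₁, h₁', -⟩ l₂ ⟨-, -, h₂⟩
    exact h₂ l₁ h₁ h₁'
  · rintro l ⟨S, -, h⟩
    exact Set.mem_iUnion.2 ⟨S, h⟩

end Lambda

section Opt

variable {α : Matrix (Fin e) (Fin d) ℝ} {m : CM e} {i : Fin e} {l : Fin e → ℝ}

theorem Opt_fst_apply : (Opt α m).1 i = sSup (loSum m '' Lambda α i) := rfl

theorem Opt_snd_apply : (Opt α m).2 i = sInf (hiSum m '' Lambda α i) := rfl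

theorem loSum_le_Opt_fst (hl : l ∈ Lambda α i) : loSum m l ≤ (Opt α m).1 i :=
  le_csSup ((Lambda_finite α i).image _).bddAbove (mem_image_of_mem _ hl)

theorem Opt_snd_le_hiSum (hl : l ∈ Lambda α i) : (Opt α m).2 i ≤ hiSum m l :=
  csInf_le ((Lambda_finite α i).image _).bddBelow (mem_image_of_mem _ hl)

theorem fst_le_Opt_fst (hαi : α i ≠ 0) : m.1 i ≤ (Opt α m).1 i :=
  loSum_single (m := m) i ▸ loSum_le_Opt_fst (single_mem_Lambda hαi)

theorem Opt_snd_le_snd (hαi : α i ≠ 0) : (Opt α m).2 i ≤ m.2 i :=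
  hiSum_single (m := m) i ▸ Opt_snd_le_hiSum (single_mem_Lambda hαi)

theorem loSum_lt_mulVec_lt_hiSum {x : Fin d → ℝ} (hx : x ∈ PolySet α m) (hαi : α i ≠ 0)
    (hl : l ∈ Lambda α i) : loSum m l < (α *ᵥ x) i ∧ (α *ᵥ x) i < hiSum m l := by
  have hlα := vecMul_eq_of_mem_Lambda hl
  have hl0 : l ≠ 0 := by
    rintro rfl
    exact hαi (by rw [← hlα, zero_vecMul])
  have hxi : (α *ᵥ x) i = l ⬝ᵥ (α *ᵥ x) := by
    rw [dotProduct_mulVec, hlα]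
    rfl
  rw [hxi]
  exact ⟨loSum_lt_dotProduct hx hl0, dotProduct_lt_hiSum hx hl0⟩

theorem Opt_fst_lt_Opt_snd_of_mem {x : Fin d → ℝ} (hx : x ∈ PolySet α m) (hαi : α i ≠ 0) :
    (Opt α m).1 i < (Opt α m).2 i := by
  have hne : (Lambda α i).Nonempty := ⟨_, single_mem_Lambda hαi⟩
  obtain ⟨l₁, hl₁, h₁⟩ := (hne.image (loSum m)).csSup_mem ((Lambda_finite α i).image _)
  obtain ⟨l₂, hl₂, h₂⟩ := (hne.image (hiSum m)).csInf_mem ((Lambda_finite α i).image _)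
  rw [Opt_fst_apply, Opt_snd_apply, ← h₁, ← h₂]
  exact (loSum_lt_mulVec_lt_hiSum hx hαi hl₁).1.trans (loSum_lt_mulVec_lt_hiSum hx hαi hl₂).2

end Opt

structure IsFarkasCert (α : Matrix (Fin e) (Fin d) ℝ) (m : CM e) (w : Fin e → ℝ) : Prop where
  ne_zero : w ≠ 0
  vecMul_eq_zero : w ᵥ* α = 0
  hiSum_nonpos : hiSum m w ≤ 0

section Farkas

variable {α : Matrix (Fin e) (Fin d) ℝ} {m : CM e}

theorem exists_isFarkasCert_of_polySet_eq_empty (hm : ∀ k, m.1 k < m.2 k)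
    (hP : PolySet α m = ∅) : ∃ w, IsFarkasCert α m w := by
  set Q : Set (Fin e → ℝ) := univ.pi fun k => Ioo (m.1 k) (m.2 k)
  have hdisj : Disjoint Q (LinearMap.range α.mulVecLin) := by
    rw [Set.disjoint_right]
    rintro _ ⟨x, rfl⟩ hx
    exact hP.subset (show x ∈ PolySet α m from fun k => hx k (mem_univ k))
  obtain ⟨f, u, hfQ, hfV⟩ := geometric_hahn_banach_open (convex_pi fun k _ => convex_Ioo _ _)
    (isOpen_set_pi finite_univ fun k _ => isOpen_Ioo) (LinearMap.range _).convex hdisj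
  set w := (dotProductEquiv ℝ (Fin e)).symm f.toLinearMap
  have hfw : ∀ y, f y = w ⬝ᵥ y := fun y => by
    rw [← dotProductEquiv_apply_apply ℝ, LinearEquiv.apply_symm_apply]
    rfl
  have hu : u ≤ 0 := by simpa using hfV 0 (zero_mem _)
  have hfα : f.toLinearMap ∘ₗ α.mulVecLin = 0 :=
    LinearMap.eq_zero_of_forall_le fun x => hfV _ ⟨x, rfl⟩
  have hclosure : ∀ y ∈ closure Q, f y ≤ 0 := fun y hy =>
    closure_minimal (fun y hy => ((hfQ y hy).trans_le hu).le)
      (isClosed_le f.continuous continuous_const) hy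
  refine ⟨w, ?_, dotProduct_eq_zero _ fun x => ?_, ?_⟩
  · rintro hw
    have hmid : (fun k => (m.1 k + m.2 k) / 2) ∈ Q :=
      fun k _ => ⟨by linarith [hm k], by linarith [hm k]⟩
    simpa [hfw, hw] using (hfQ _ hmid).trans_le hu
  · rw [← dotProduct_mulVec, ← hfw]
    exact LinearMap.congr_fun hfα x
  · have hmem : (fun k => eHigh (w k) m k) ∈ closure Q := by
      rw [closure_pi_set]
      intro k _
      dsimp only
      rw [closure_Ioo (hm k).ne]
      exact eHigh_mem_Icc (hm k).le _
    exact (hfw _).symm.trans_le (hclosure _ hmem)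

end Farkas

namespace IsFarkasCert

variable {α : Matrix (Fin e) (Fin d) ℝ} {m : CM e} {w : Fin e → ℝ}

theorem exists_support_ssubset (hw : IsFarkasCert α m w) {i : Fin e} (hi : w i ≠ 0)
    {c : Fin e → ℝ} (hc : c ≠ 0) (hci : c i = 0) (hcw : support c ⊆ support w)
    (hcα : c ᵥ* α = 0) : ∃ w', IsFarkasCert α m w' ∧ support w' ⊂ support w := by
  wlog hce : c ⬝ᵥ (fun k => eHigh (w k) m k) ≤ 0 generalizing c
  · refine this (neg_ne_zero.2 hc) (by simp [hci]) (by rwa [support_neg]) ?_ ?_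
    · rw [neg_vecMul, hcα, neg_zero]
    · rw [neg_dotProduct]
      linarith
  have hcw' : ∀ k, w k = 0 → c k = 0 := fun k => not_imp_not.1 (@hcw k)
  by_cases hsign : ∃ k, w k * c k < 0
  · obtain ⟨t, ht, hsame, k₀, hk₀, hvan⟩ := exists_pos_add_mul_eq_zero_of_mul_neg hsign
    have hsupp : support (w + t • c) ⊆ support w := fun k hk hwk => hk (by simp [hwk, hcw' k hwk])
    refine ⟨w + t • c, ⟨fun h => hi ?_, ?_, ?_⟩, (ssubset_iff_of_subset hsupp).2 ⟨k₀, hk₀, ?_⟩⟩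
    · simpa [hci] using congrFun h i
    · rw [add_vecMul, smul_vecMul, hw.vecMul_eq_zero, hcα, smul_zero, add_zero]
    · have hw0 : w ⬝ᵥ (fun k => eHigh (w k) m k) ≤ 0 := hw.hiSum_nonpos
      rw [hiSum_eq_dotProduct_of_mul_pos (v := w + t • c) fun k hk =>
        lt_of_le_of_ne (hsame k) (mul_ne_zero (hsupp hk) hk).symm, add_dotProduct,
        smul_dotProduct, smul_eq_mul]
      nlinarith
    · simpa using hvan
  · simp only [not_exists, not_lt] at hsign
    refine ⟨c, ⟨hc, hcα, ?_⟩, (ssubset_iff_of_subset hcw).2 ⟨i, hi, by simpa using hci⟩⟩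
    rw [hiSum_eq_dotProduct_of_mul_pos fun k hk =>
      lt_of_le_of_ne (hsign k) (mul_ne_zero (fun h => hk (hcw' k h)) hk).symm]
    exact hce

theorem update_mem_Lambda (hw : IsFarkasCert α m w) {i : Fin e} (hi : w i ≠ 0)
    (hind : LinearIndepOn ℝ α.row ↑(univ.filter fun k => k ≠ i ∧ w k ≠ 0)) :
    update ((-(w i)⁻¹) • w) i 0 ∈ Lambda α i := by
  refine mem_Lambda_of_linearIndepOn hind (fun k hk => ?_) ?_
  · rcases eq_or_ne k i with rfl | hki
    · exact update_self ..
    · simp_all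
  · have : update ((-(w i)⁻¹) • w) i 0 = (-(w i)⁻¹) • w + Pi.single i 1 := by
      ext k
      rcases eq_or_ne k i with rfl | hk <;> simp [*]
    rw [this, add_vecMul, smul_vecMul, hw.vecMul_eq_zero, smul_zero, zero_add, single_one_vecMul]
    rfl

end IsFarkasCert

section Minimal

variable {α : Matrix (Fin e) (Fin d) ℝ} {m : CM e}

theorem exists_isFarkasCert_linearIndepOn (h : ∃ w, IsFarkasCert α m w) :
    ∃ w i, IsFarkasCert α m w ∧ w i ≠ 0 ∧
      LinearIndepOn ℝ α.row ↑(univ.filter fun k => k ≠ i ∧ w k ≠ 0) := by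
  obtain ⟨w, hw, hmin⟩ := (InvImage.wf (fun w : Fin e → ℝ => support w) wellFounded_lt).has_min
    {w | IsFarkasCert α m w} h
  obtain ⟨i, hi⟩ := Function.ne_iff.1 hw.ne_zero
  refine ⟨w, i, hw, hi, (α.linearIndepOn_row_iff _).2 fun c hcS hcα => ?_⟩
  by_contra hc
  have hcS' : ∀ k, c k ≠ 0 → k ≠ i ∧ w k ≠ 0 :=
    fun k hk => by_contra fun h' => hk (hcS k (by simpa using h'))
  obtain ⟨w', hw', hss⟩ := hw.exists_support_ssubset hi hc
    (not_not.1 fun h => (hcS' i h).1 rfl) (fun k hk => (hcS' k hk).2) hcα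
  exact hmin w' hw' hss

theorem exists_Opt_snd_le_Opt_fst (hα : ∀ i, α i ≠ 0) (h : ∃ w, IsFarkasCert α m w) :
    ∃ i, (Opt α m).2 i ≤ (Opt α m).1 i := by
  obtain ⟨w, i, hw, hi, hind⟩ := exists_isFarkasCert_linearIndepOn h
  have hl := hw.update_mem_Lambda hi hind
  have hw0 := hw.hiSum_nonpos
  refine ⟨i, ?_⟩
  rcases hi.lt_or_gt with hneg | hpos
  · have ht : 0 < -(w i)⁻¹ := neg_pos.2 (inv_lt_zero.2 hneg)
    calc (Opt α m).2 i ≤ hiSum m (update ((-(w i)⁻¹) • w) i 0) := Opt_snd_le_hiSum hl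
      _ = -(w i)⁻¹ * hiSum m w + m.1 i := by
        rw [hiSum_update_smul ht.le, eHigh, if_neg hneg.not_ge]
        field_simp
        ring
      _ ≤ m.1 i := by nlinarith
      _ ≤ (Opt α m).1 i := fst_le_Opt_fst (hα i)
  · have ht : 0 < (w i)⁻¹ := inv_pos.2 hpos
    have hflip : -update ((-(w i)⁻¹) • w) i 0 = update ((w i)⁻¹ • w) i 0 := by
      ext k
      rcases eq_or_ne k i with rfl | hk <;> simp [*]
    calc (Opt α m).2 i ≤ m.2 i := Opt_snd_le_snd (hα i)
      _ ≤ m.2 i - (w i)⁻¹ * hiSum m w := by nlinarith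
      _ = loSum m (update ((-(w i)⁻¹) • w) i 0) := by
        rw [loSum_eq_neg_hiSum_neg, hflip, hiSum_update_smul ht.le, eHigh, if_pos hpos.le]
        field_simp
        ring
      _ ≤ (Opt α m).1 i := loSum_le_Opt_fst hl

end Minimal

end Polytope

theorem statement_0_general {d e : ℕ}
    (α : Matrix (Fin e) (Fin d) ℝ) (hα : Nondeg α) (m : CM e) :
    (PolySet α m).Nonempty ↔ ∀ i : Fin e, (Opt α m).1 i < (Opt α m).2 i := by
  constructor
  · rintro ⟨x, hx⟩ i
    exact Opt_fst_lt_Opt_snd_of_mem hx (hα.1 i)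
  · intro h
    by_contra hP
    have hm : ∀ k, m.1 k < m.2 k := fun k =>
      ((fst_le_Opt_fst (hα.1 k)).trans_lt (h k)).trans_le (Opt_snd_le_snd (hα.1 k))
    obtain ⟨i, hi⟩ := exists_Opt_snd_le_Opt_fst hα.1
      (exists_isFarkasCert_of_polySet_eq_empty hm (not_nonempty_iff_eq_empty.1 hP))
    exact (h i).not_ge hi

/-- `P^α_m` is nonempty iff all optimized lower bounds are strictly below
the corresponding optimized upper bounds. -/
theorem statement_0 {d e : ℕ} (hd : 1 ≤ d) (hde : d ≤ e)
    (α : Matrix (Fin e) (Fin d) ℝ) (hα : Nondeg α) (m : CM e) :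
    (PolySet α m).Nonempty ↔ ∀ i : Fin e, (Opt α m).1 i < (Opt α m).2 i :=
  statement_0_general α hα m
end

section
/- Let α ∈ ℝ^{e×d} (e ≥ d ≥ 1) be a non-degenerate coefficient matrix and let σ be an invertible affine transformation of ℝ^d. (i) If σ is α-compatible, then σ(P^α_m) = P^α_{σ(m)} for every constraint matrix m. (ii) If σ is α-compatible and the diagonal matrix A in the compatibility relation equals a·Id for some a ∈ ℝ \ {0}, then O ∘ σ = σ ∘ O on constraint matrices, where O is the associated optimization map. -/
open Set

/-- `σ` is `α`-compatible with data `(a, π, B)`: `α(σx) = A π (αx) + B` where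
`A = diag(a)` with nonzero entries and `π` permutes coordinates. -/
def IsCompatData {e d : ℕ} (α : Matrix (Fin e) (Fin d) ℝ)
    (σ : (Fin d → ℝ) ≃ᵃ[ℝ] (Fin d → ℝ))
    (a : Fin e → ℝ) (π : Equiv.Perm (Fin e)) (B : Fin e → ℝ) : Prop :=
  (∀ i, a i ≠ 0) ∧
  ∀ (x : Fin d → ℝ) (i : Fin e), α.mulVec (σ x) i = a i * α.mulVec x (π i) + B i

/-- The transformation induced on constraint matrices by an `α`-compatible `σ`
with data `(a, π, B)`. -/
noncomputable def cmMap {e : ℕ} (a : Fin e → ℝ) (π : Equiv.Perm (Fin e)) (B : Fin e → ℝ)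
    (m : CM e) : CM e :=
  (fun i => if 0 < a i then a i * m.1 (π i) + B i else a i * m.2 (π i) + B i,
   fun i => if 0 < a i then a i * m.2 (π i) + B i else a i * m.1 (π i) + B i)


/-!
Compatibility says that `σ` acts on the row values `αx` by a permutation of the rows followed by
the coordinatewise affine maps `t ↦ aᵢ t + Bᵢ`, each of which maps an open interval onto the open
interval between the images of its endpoints (swapped when `aᵢ < 0`); this gives (i).

For (ii), with `A = c • 1`, the linear part `L` of `σ` satisfies `α L = c (α permuted by π)` and is
invertible, so `λᵀα = αᵢ` holds exactly when it holds for the permuted rows: `Λᵢ = Λ_{π i} ∘ π`.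
Since `B = α σ(0)`, every `λ ∈ Λᵢ` has `λ ⬝ B = Bᵢ`, hence the objective of `σ(m)` at `λ ∘ π` is
`c` times the objective of `m` at `λ` (with lower and upper bounds exchanged when `c < 0`) plus
`Bᵢ`. Finally, on the finite nonempty sets `Λᵢ`, the maximum and minimum commute with the monotone
or antitone map `s ↦ c s + Bᵢ`.
-/

open Matrix

lemma ite_lt_mul_add_and_mul_add_lt_ite_iff {a b t lo hi : ℝ} (ha : a ≠ 0) :
    ((if 0 < a then a * lo + b else a * hi + b) < a * t + b ∧
      a * t + b < if 0 < a then a * hi + b else a * lo + b) ↔ lo < t ∧ t < hi := by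
  rcases ha.lt_or_gt with ha | ha
  · simp only [if_neg ha.not_gt, add_lt_add_iff_right, mul_lt_mul_left_of_neg ha]
    exact and_comm
  · simp only [if_pos ha, add_lt_add_iff_right, mul_lt_mul_iff_right₀ ha]

section Compat

variable {e d : ℕ} {α : Matrix (Fin e) (Fin d) ℝ} {σ : (Fin d → ℝ) ≃ᵃ[ℝ] (Fin d → ℝ)}
  {a : Fin e → ℝ} {π : Equiv.Perm (Fin e)} {B : Fin e → ℝ}

lemma IsCompatData.apply_mem_polySet_cmMap_iff (hc : IsCompatData α σ a π B) (m : CM e)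
    (x : Fin d → ℝ) : σ x ∈ PolySet α (cmMap a π B m) ↔ x ∈ PolySet α m := by
  simp only [PolySet, Set.mem_ofPred_eq, cmMap, hc.2,
    ite_lt_mul_add_and_mul_add_lt_ite_iff (hc.1 _)]
  exact ⟨fun h i => by simpa using h (π.symm i), fun h i => h (π i)⟩

lemma IsCompatData.image_polySet (hc : IsCompatData α σ a π B) (m : CM e) :
    σ '' PolySet α m = PolySet α (cmMap a π B m) := by
  ext y
  rw [← σ.apply_symm_apply y, σ.injective.mem_set_image, hc.apply_mem_polySet_cmMap_iff]

lemma IsCompatData.mulVec_apply_zero (hc : IsCompatData α σ a π B) : α *ᵥ σ 0 = B := by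
  ext i
  simpa using hc.2 0 i

lemma IsCompatData.mulVec_linear {c : ℝ} (hc : IsCompatData α σ (fun _ => c) π B)
    (x : Fin d → ℝ) : α *ᵥ σ.linear x = c • (α.submatrix π id *ᵥ x) := by
  have hσ : σ x = σ.linear x + σ 0 := by simpa using σ.map_vadd 0 x
  ext i
  have h := hc.2 x i
  rw [hσ, mulVec_add, Pi.add_apply, hc.mulVec_apply_zero, add_left_inj] at h
  exact h

end Compat

lemma vecMul_eq_row_iff {R m n : Type*} [CommSemiring R] [Fintype m] [Fintype n]
    [DecidableEq n] (A : Matrix m n R) (v : m → R) (i : m) :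
    v ᵥ* A = A i ↔ ∀ x, v ⬝ᵥ (A *ᵥ x) = (A *ᵥ x) i := by
  refine ⟨fun h x => by rw [dotProduct_mulVec, h]; rfl, fun h => funext fun j => ?_⟩
  have hj := h (Pi.single j 1)
  rw [mulVec_single_one] at hj
  exact hj

lemma vecMul_eq_row_iff_of_mulVec_linearEquiv {K m n : Type*} [Field K] [Fintype m]
    [Fintype n] [DecidableEq n] {A A' : Matrix m n K} {M : (n → K) ≃ₗ[K] (n → K)} {c : K}
    (hc : c ≠ 0) (hM : ∀ x, A *ᵥ M x = c • (A' *ᵥ x)) (v : m → K) (i : m) :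
    v ᵥ* A = A i ↔ v ᵥ* A' = A' i := by
  rw [vecMul_eq_row_iff, vecMul_eq_row_iff, M.surjective.forall]
  simp only [hM, dotProduct_smul, Pi.smul_apply, smul_eq_mul, mul_right_inj' hc]

section Lambda

variable {e d : ℕ} {α : Matrix (Fin e) (Fin d) ℝ}

lemma mem_lambda_iff {i : Fin e} {l : Fin e → ℝ} :
    l ∈ Lambda α i ↔ ∃ S : Finset (Fin e), S.card ≤ d ∧ (∀ k ∉ S, l k = 0) ∧ l ᵥ* α = α i ∧
      ∀ l' : Fin e → ℝ, (∀ k ∉ S, l' k = 0) → l' ᵥ* α = α i → l' = l := by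
  simp only [Lambda, Set.mem_ofPred_eq, funext_iff, vecMul, dotProduct]

lemma dotProduct_mulVec_of_mem_lambda {i : Fin e} {l : Fin e → ℝ} (hl : l ∈ Lambda α i)
    (x : Fin d → ℝ) : l ⬝ᵥ (α *ᵥ x) = (α *ᵥ x) i := by
  obtain ⟨S, -, -, hrow, -⟩ := mem_lambda_iff.1 hl
  exact (vecMul_eq_row_iff α l i).1 hrow x

lemma lambda_eq_of_mulVec_linearEquiv {α' : Matrix (Fin e) (Fin d) ℝ}
    {M : (Fin d → ℝ) ≃ₗ[ℝ] (Fin d → ℝ)} {c : ℝ} (hc : c ≠ 0)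
    (hM : ∀ x, α *ᵥ M x = c • (α' *ᵥ x)) (i : Fin e) : Lambda α i = Lambda α' i := by
  ext l
  simp only [mem_lambda_iff, vecMul_eq_row_iff_of_mulVec_linearEquiv hc hM]

lemma comp_mem_lambda_submatrix {π : Equiv.Perm (Fin e)} {i : Fin e} {l : Fin e → ℝ}
    (hl : l ∈ Lambda α (π i)) : l ∘ π ∈ Lambda (α.submatrix π id) i := by
  obtain ⟨S, hcard, hsupp, hrow, huniq⟩ := mem_lambda_iff.1 hl
  have hrow_iff : ∀ l' : Fin e → ℝ,
      l' ᵥ* α.submatrix π id = α.submatrix π id i ↔ (l' ∘ π.symm) ᵥ* α = α (π i) := by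
    intro l'
    rw [submatrix_vecMul_equiv]
    rfl
  refine mem_lambda_iff.2 ⟨S.map π.symm.toEmbedding, by rwa [Finset.card_map], ?_, ?_, ?_⟩
  · intro k hk
    exact hsupp _ (by simpa using hk)
  · rw [hrow_iff]
    simpa [Function.comp_assoc] using hrow
  · intro l' hsupp' hrow'
    have hl' := huniq (l' ∘ π.symm) (fun k hk => hsupp' _ (by simpa using hk))
      ((hrow_iff l').1 hrow')
    rw [← hl']
    ext k
    simp

lemma lambda_submatrix (π : Equiv.Perm (Fin e)) (i : Fin e) :
    Lambda (α.submatrix π id) i = (· ∘ π) '' Lambda α (π i) := by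
  refine Set.Subset.antisymm (fun l hl => ⟨l ∘ π.symm, ?_, by ext; simp⟩) ?_
  · simpa [submatrix_submatrix] using
      comp_mem_lambda_submatrix (α := α.submatrix π id) (π := π.symm) (i := π i) (by simpa using hl)
  · rintro _ ⟨l, hl, rfl⟩
    exact comp_mem_lambda_submatrix hl

lemma lambda_finite (i : Fin e) : (Lambda α i).Finite := by
  have hsub : Lambda α i ⊆ ⋃ S : Finset (Fin e), {l | (∀ k ∉ S, l k = 0) ∧ l ᵥ* α = α i ∧
      ∀ l' : Fin e → ℝ, (∀ k ∉ S, l' k = 0) → l' ᵥ* α = α i → l' = l} := fun l hl => by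
    obtain ⟨S, -, hS⟩ := mem_lambda_iff.1 hl
    exact Set.mem_iUnion.2 ⟨S, hS⟩
  exact (Set.finite_iUnion fun S => Set.Subsingleton.finite fun x hx y hy =>
    hy.2.2 x hx.1 hx.2.1).subset hsub

lemma single_one_mem_lambda {i : Fin e} (hα : α i ≠ 0) : Pi.single i 1 ∈ Lambda α i := by
  have hd : 1 ≤ d :=
    Nat.one_le_iff_ne_zero.2 fun hd => hα (by subst hd; exact Subsingleton.elim _ _)
  refine mem_lambda_iff.2 ⟨{i}, by simpa using hd, fun k hk => ?_, single_one_vecMul i α, ?_⟩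
  · exact Pi.single_eq_of_ne (by simpa using hk) 1
  · intro l' hsupp hrow
    have hl' : l' = Pi.single i (l' i) := by
      ext k
      by_cases hk : k = i
      · subst hk; simp
      · simp [hsupp k (by simpa using hk), Pi.single_eq_of_ne hk]
    rw [hl', single_vecMul] at hrow
    rw [hl', smul_left_injective ℝ hα (hrow.trans (one_smul ℝ _).symm)]

end Lambda

lemma sSup_image_mul_add_of_pos {S : Set ℝ} (hS : S.Finite) (hne : S.Nonempty) {c : ℝ}
    (hc : 0 < c) (b : ℝ) : sSup ((fun s => c * s + b) '' S) = c * sSup S + b :=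
  (Monotone.map_csSup_of_continuousAt (by fun_prop) (fun _ _ h => by gcongr) hne
    hS.bddAbove).symm

lemma sInf_image_mul_add_of_pos {S : Set ℝ} (hS : S.Finite) (hne : S.Nonempty) {c : ℝ}
    (hc : 0 < c) (b : ℝ) : sInf ((fun s => c * s + b) '' S) = c * sInf S + b :=
  (Monotone.map_csInf_of_continuousAt (by fun_prop) (fun _ _ h => by gcongr) hne
    hS.bddBelow).symm

lemma sSup_image_mul_add_of_neg {S : Set ℝ} (hS : S.Finite) (hne : S.Nonempty) {c : ℝ}
    (hc : c < 0) (b : ℝ) : sSup ((fun s => c * s + b) '' S) = c * sInf S + b :=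
  (Antitone.map_csInf_of_continuousAt (by fun_prop) (fun _ _ h => by nlinarith) hne
    hS.bddBelow).symm

lemma sInf_image_mul_add_of_neg {S : Set ℝ} (hS : S.Finite) (hne : S.Nonempty) {c : ℝ}
    (hc : c < 0) (b : ℝ) : sInf ((fun s => c * s + b) '' S) = c * sSup S + b :=
  (Antitone.map_csSup_of_continuousAt (by fun_prop) (fun _ _ h => by nlinarith) hne
    hS.bddAbove).symm

section Opt

variable {e : ℕ} {π : Equiv.Perm (Fin e)} {c : ℝ} {B : Fin e → ℝ}

lemma eLow_cmMap_const (t : ℝ) (m : CM e) (k : Fin e) :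
    eLow t (cmMap (fun _ => c) π B m) k =
      if 0 < c then c * eLow t m (π k) + B k else c * eHigh t m (π k) + B k := by
  unfold eLow eHigh cmMap
  split_ifs <;> rfl

lemma eHigh_cmMap_const (t : ℝ) (m : CM e) (k : Fin e) :
    eHigh t (cmMap (fun _ => c) π B m) k =
      if 0 < c then c * eHigh t m (π k) + B k else c * eLow t m (π k) + B k := by
  unfold eLow eHigh cmMap
  split_ifs <;> rfl

lemma image_sum_mul_comp_perm {Λ Λ' : Set (Fin e → ℝ)} {b : ℝ} (hΛ : Λ = (· ∘ π) '' Λ')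
    (hB : ∀ l ∈ Λ, l ⬝ᵥ B = b) (E : ℝ → Fin e → ℝ) :
    (fun l => ∑ k, l k * (c * E (l k) (π k) + B k)) '' Λ =
      (fun s => c * s + b) '' ((fun l => ∑ k, l k * E (l k) k) '' Λ') := by
  subst hΛ
  rw [Set.image_image, Set.image_image]
  refine Set.image_congr fun μ hμ => ?_
  calc ∑ k, (μ ∘ π) k * (c * E ((μ ∘ π) k) (π k) + B k)
      = c * ∑ k, μ (π k) * E (μ (π k)) (π k) + (μ ∘ π) ⬝ᵥ B := by
        simp only [Function.comp_apply, dotProduct, mul_add, Finset.sum_add_distrib,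
          Finset.mul_sum, mul_left_comm c]
    _ = c * ∑ k, μ k * E (μ k) k + b := by
        rw [hB _ (Set.mem_image_of_mem _ hμ), Equiv.sum_comp π (fun k => μ k * E (μ k) k)]

lemma opt_cmMap_const {d : ℕ} {α : Matrix (Fin e) (Fin d) ℝ} (hc : c ≠ 0) (hα : ∀ i, α i ≠ 0)
    (hΛ : ∀ i, Lambda α i = (· ∘ π) '' Lambda α (π i))
    (b : Fin d → ℝ) (m : CM e) :
    Opt α (cmMap (fun _ => c) π (α *ᵥ b) m) = cmMap (fun _ => c) π (α *ᵥ b) (Opt α m) := by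
  have hB i : ∀ l ∈ Lambda α i, l ⬝ᵥ (α *ᵥ b) = (α *ᵥ b) i :=
    fun _ hl => dotProduct_mulVec_of_mem_lambda hl b
  have hfin i := lambda_finite (α := α) (π i)
  -- `sSup ∅ = 0` in `ℝ`: without nonempty `Λᵢ` the commutation fails at the translation `Bᵢ`.
  have hne i : (Lambda α (π i)).Nonempty := ⟨_, single_one_mem_lambda (hα _)⟩
  rcases hc.lt_or_gt with hneg | hpos
  · refine Prod.ext (funext fun i => ?_) (funext fun i => ?_) <;>
      simp only [Opt, eLow_cmMap_const, eHigh_cmMap_const, if_neg hneg.not_gt] <;>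
      simp only [cmMap, if_neg hneg.not_gt]
    · rw [image_sum_mul_comp_perm (hΛ i) (hB i) (eHigh · m),
        sSup_image_mul_add_of_neg ((hfin i).image _) ((hne i).image _) hneg]
    · rw [image_sum_mul_comp_perm (hΛ i) (hB i) (eLow · m),
        sInf_image_mul_add_of_neg ((hfin i).image _) ((hne i).image _) hneg]
  · refine Prod.ext (funext fun i => ?_) (funext fun i => ?_) <;>
      simp only [Opt, eLow_cmMap_const, eHigh_cmMap_const, if_pos hpos] <;>
      simp only [cmMap, if_pos hpos]
    · rw [image_sum_mul_comp_perm (hΛ i) (hB i) (eLow · m),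
        sSup_image_mul_add_of_pos ((hfin i).image _) ((hne i).image _) hpos]
    · rw [image_sum_mul_comp_perm (hΛ i) (hB i) (eHigh · m),
        sInf_image_mul_add_of_pos ((hfin i).image _) ((hne i).image _) hpos]

end Opt

theorem statement_4_general {d e : ℕ}
    (α : Matrix (Fin e) (Fin d) ℝ) (hα : Nondeg α)
    (σ : (Fin d → ℝ) ≃ᵃ[ℝ] (Fin d → ℝ))
    (a : Fin e → ℝ) (π : Equiv.Perm (Fin e)) (B : Fin e → ℝ)
    (hc : IsCompatData α σ a π B) :
    (∀ m : CM e, ⇑σ '' PolySet α m = PolySet α (cmMap a π B m)) ∧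
    ((∃ c : ℝ, c ≠ 0 ∧ ∀ i, a i = c) →
      ∀ m : CM e, Opt α (cmMap a π B m) = cmMap a π B (Opt α m)) := by
  refine ⟨hc.image_polySet, ?_⟩
  rintro ⟨c, hc0, hac⟩
  obtain rfl : a = fun _ => c := funext hac
  have hΛ i : Lambda α i = (· ∘ π) '' Lambda α (π i) := by
    rw [lambda_eq_of_mulVec_linearEquiv hc0 hc.mulVec_linear, lambda_submatrix]
  rw [← hc.mulVec_apply_zero]
  exact opt_cmMap_const hc0 hα.1 hΛ (σ 0)

/-- (i) an `α`-compatible `σ` maps `P^α_m` onto `P^α_{σ(m)}`;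
(ii) if moreover `A = a·Id`, then `O ∘ σ = σ ∘ O`. -/
theorem statement_4 {d e : ℕ} (hd : 1 ≤ d) (hde : d ≤ e)
    (α : Matrix (Fin e) (Fin d) ℝ) (hα : Nondeg α)
    (σ : (Fin d → ℝ) ≃ᵃ[ℝ] (Fin d → ℝ))
    (a : Fin e → ℝ) (π : Equiv.Perm (Fin e)) (B : Fin e → ℝ)
    (hc : IsCompatData α σ a π B) :
    (∀ m : CM e, ⇑σ '' PolySet α m = PolySet α (cmMap a π B m)) ∧
    ((∃ c : ℝ, c ≠ 0 ∧ ∀ i, a i = c) →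
      ∀ m : CM e, Opt α (cmMap a π B m) = cmMap a π B (Opt α m)) :=
  statement_4_general α hα σ a π B hc
end

section
/- Let {σ_i}_{i=1}^s be a finite collection of affine transformations of ℝ^d which generate a finite group under composition. Then there exist an integer e ≥ d and a non-degenerate coefficient matrix α ∈ ℝ^{e×d} such that every σ_i is α-compatible. -/
open Set

/-- `σ` is `α`-compatible: there exist a diagonal matrix `A = diag(a)` with nonzero
entries, a coordinate permutation `π` and `B ∈ ℝ^e` with `α(σx) = A π (αx) + B`. -/
def AlphaCompatible {e d : ℕ} (α : Matrix (Fin e) (Fin d) ℝ)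
    (σ : (Fin d → ℝ) ≃ᵃ[ℝ] (Fin d → ℝ)) : Prop :=
  ∃ (a : Fin e → ℝ) (π : Equiv.Perm (Fin e)) (B : Fin e → ℝ),
    (∀ i, a i ≠ 0) ∧
    ∀ (x : Fin d → ℝ) (i : Fin e), α.mulVec (σ x) i = a i * α.mulVec x (π i) + B i

/-!
The linear parts of the maps in the finite group `G` generated by the `σ i` act on covectors by
pullback, and this action permutes lines. Take the finitely many lines in the dual spanned by the
pulled-back coordinate functionals `xⱼ ∘ g` (`g ∈ G`) and let the rows of `α` be one covector
from each line. Pulling back along `σ i` maps this finite set of lines injectively into itself,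
hence permutes it, so each row composed with the linear part of `σ i` is a nonzero multiple of
another row. That is `α`-compatibility, with the translation part of `σ i` going into `B`. The
coordinate lines alone already give `e ≥ d`.
-/

open Function Module Projectivization
open scoped LinearAlgebra.Projectivization

namespace Projectivization

theorem exists_perm_map_rep_eq_smul {K W ι : Type*} [DivisionRing K] [AddCommGroup W]
    [Module K W] [Finite ι] {q : ι → ℙ K W} (hq : Injective q) (f : W →ₗ[K] W)
    (hf : Injective f) (hmaps : ∀ t, map f hf (q t) ∈ range q) :
    ∃ (π : Equiv.Perm ι) (a : ι → K),
      (∀ t, a t ≠ 0) ∧ ∀ t, f (q t).rep = a t • (q (π t)).rep := by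
  choose π hπ using hmaps
  have hπ_inj : Injective π := fun t t' h => hq (map_injective f hf (by rw [← hπ, ← hπ, h]))
  have hmk : ∀ t, mk K (f (q t).rep) (map_zero f ▸ hf.ne (q t).rep_nonzero) =
      mk K (q (π t)).rep (q (π t)).rep_nonzero := fun t => by
    rw [mk_rep, hπ, ← map_mk _ _ _ (q t).rep_nonzero, mk_rep]
  choose a ha using fun t => (mk_eq_mk_iff K _ _ _ _).mp (hmk t)
  exact ⟨Equiv.ofBijective π (Finite.injective_iff_bijective.mp hπ_inj), fun t => a t,
    fun t => (a t).ne_zero, fun t => (ha t).symm⟩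

end Projectivization

section DualPullback

variable {K V : Type*} [Field K] [AddCommGroup V] [Module K V]

def dualPullback (g : V ≃ᵃ[K] V) : ℙ K (Dual K V) → ℙ K (Dual K V) :=
  map (g.linear.dualMap : Dual K V →ₗ[K] Dual K V) g.linear.dualMap.injective

theorem dualPullback_one : dualPullback (1 : V ≃ᵃ[K] V) = id := by
  ext ⟨φ⟩
  rfl

theorem dualPullback_mul (g h : V ≃ᵃ[K] V) :
    dualPullback (g * h) = dualPullback h ∘ dualPullback g := by
  ext ⟨φ⟩
  rfl

def dualPullbackOrbit (G : Subgroup (V ≃ᵃ[K] V)) (B : Set (ℙ K (Dual K V))) :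
    Set (ℙ K (Dual K V)) :=
  image2 dualPullback G B

variable {G : Subgroup (V ≃ᵃ[K] V)} {B : Set (ℙ K (Dual K V))}

theorem subset_dualPullbackOrbit : B ⊆ dualPullbackOrbit G B := fun p hp =>
  ⟨1, G.one_mem, p, hp, by rw [dualPullback_one, id]⟩

theorem dualPullback_mem_dualPullbackOrbit {g : V ≃ᵃ[K] V} (hg : g ∈ G) {p : ℙ K (Dual K V)}
    (hp : p ∈ dualPullbackOrbit G B) : dualPullback g p ∈ dualPullbackOrbit G B := by
  obtain ⟨h, hh, p₀, hp₀, rfl⟩ := hp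
  exact ⟨h * g, G.mul_mem hh hg, p₀, hp₀, by rw [dualPullback_mul, comp_apply]⟩

theorem dualPullbackOrbit_finite (hG : (G : Set (V ≃ᵃ[K] V)).Finite) (hB : B.Finite) :
    (dualPullbackOrbit G B).Finite :=
  hG.image2 _ hB

end DualPullback

theorem Module.Basis.coord_ne_zero {ι K V : Type*} [Field K] [AddCommGroup V] [Module K V]
    (b : Basis ι K V) (j : ι) : b.coord j ≠ 0 := by
  intro h
  simpa using LinearMap.congr_fun h (b j)

section CoordPoint

variable {ι K V : Type*} [Field K] [AddCommGroup V] [Module K V]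

noncomputable def coordPoint (b : Basis ι K V) (j : ι) : ℙ K (Dual K V) :=
  mk K (b.coord j) (b.coord_ne_zero j)

theorem coordPoint_injective (b : Basis ι K V) : Injective (coordPoint b) := by
  intro j k h
  obtain ⟨a, ha⟩ := (mk_eq_mk_iff' K _ _ _ _).mp h
  by_contra hjk
  simpa [Finsupp.single_apply, hjk] using (LinearMap.congr_fun ha (b j)).symm

end CoordPoint

section CoefMatrix

variable {e d : ℕ} (q : Fin e → ℙ ℝ (Dual ℝ (Fin d → ℝ)))

noncomputable def coefMatrix : Matrix (Fin e) (Fin d) ℝ :=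
  fun t => (dotProductEquiv ℝ (Fin d)).symm (q t).rep

theorem coefMatrix_mulVec_apply (x : Fin d → ℝ) (t : Fin e) :
    (coefMatrix q).mulVec x t = (q t).rep x :=
  LinearMap.congr_fun ((dotProductEquiv ℝ (Fin d)).apply_symm_apply (q t).rep) x

theorem nondeg_coefMatrix {q : Fin e → ℙ ℝ (Dual ℝ (Fin d → ℝ))} (hq : Injective q) :
    Nondeg (coefMatrix q) := by
  refine ⟨fun t => (LinearEquiv.map_ne_zero_iff _).mpr (q t).rep_nonzero,
    fun t t' htt' c h => htt' (hq ?_)⟩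
  have hrep : (q t).rep = c • (q t').rep := by
    simpa [coefMatrix] using congrArg (dotProductEquiv ℝ (Fin d)) h
  rw [← mk_rep (q t), ← mk_rep (q t')]
  exact (mk_eq_mk_iff' ℝ _ _ _ _).mpr ⟨c, hrep.symm⟩

theorem alphaCompatible_coefMatrix {σ : (Fin d → ℝ) ≃ᵃ[ℝ] (Fin d → ℝ)} {π : Equiv.Perm (Fin e)}
    {a : Fin e → ℝ} (ha : ∀ t, a t ≠ 0)
    (h : ∀ t, σ.linear.dualMap (q t).rep = a t • (q (π t)).rep) :
    AlphaCompatible (coefMatrix q) σ := by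
  refine ⟨a, π, fun t => (q t).rep (σ 0), ha, fun x t => ?_⟩
  have hσ : σ x = σ.linear x + σ 0 := congrFun (σ.toAffineMap.decomp) x
  rw [coefMatrix_mulVec_apply, coefMatrix_mulVec_apply, hσ, map_add,
    ← LinearEquiv.dualMap_apply, h]
  rfl

end CoefMatrix

/-- a finite collection of affine transformations of `ℝ^d` generating a
finite group is simultaneously `α`-compatible for some non-degenerate coefficient
matrix `α ∈ ℝ^{e×d}` with `e ≥ d`. -/
theorem statement_5 {d s : ℕ}
    (σ : Fin s → ((Fin d → ℝ) ≃ᵃ[ℝ] (Fin d → ℝ)))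
    (hfin : (Subgroup.closure (Set.range σ) :
        Subgroup ((Fin d → ℝ) ≃ᵃ[ℝ] (Fin d → ℝ))).carrier.Finite) :
    ∃ e : ℕ, d ≤ e ∧ ∃ α : Matrix (Fin e) (Fin d) ℝ,
      Nondeg α ∧ ∀ i, AlphaCompatible α (σ i) := by
  set G := Subgroup.closure (range σ)
  set P := dualPullbackOrbit G (range (coordPoint (Pi.basisFun ℝ (Fin d))))
  have : Finite P := (dualPullbackOrbit_finite hfin (finite_range _)).to_subtype
  set q : Fin (Nat.card P) → ℙ ℝ (Dual ℝ (Fin d → ℝ)) := fun t => (Finite.equivFin P).symm t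
  have hq : Injective q := Subtype.val_injective.comp (Finite.equivFin P).symm.injective
  have hcoord : Injective fun j => (⟨_, subset_dualPullbackOrbit (mem_range_self j)⟩ : P) :=
    fun j k h => coordPoint_injective _ (congrArg Subtype.val h)
  refine ⟨Nat.card P, by simpa using Nat.card_le_card_of_injective _ hcoord, coefMatrix q,
    nondeg_coefMatrix hq, fun i => ?_⟩
  have hmaps : ∀ t, dualPullback (σ i) (q t) ∈ range q := fun t =>
    ⟨Finite.equivFin P ⟨_, dualPullback_mem_dualPullbackOrbit
      (Subgroup.subset_closure (mem_range_self i)) ((Finite.equivFin P).symm t).2⟩,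
      congrArg Subtype.val ((Finite.equivFin P).symm_apply_apply _)⟩
  obtain ⟨π, a, ha, h⟩ := exists_perm_map_rep_eq_smul hq _ _ hmaps
  exact alphaCompatible_coefMatrix q ha h
end

section
/- Let ϱ ∈ (0,1/2), a > 1, ε ∈ (0,1/2), and suppose the polytope P^{α_a}_{m_a} is nonempty and solves Conditioning Problem 1 for G_{ϱ,ε}. Then the union U = P^{α_a}_{m_a} ∪ σ₃₂₁(P^{α_a}_{m_a}) is an AsIUP for G_{ϱ,ε}: G_{ϱ,ε}(U) ⊆ U and Σ(U) ∩ U = ∅, where Σ(x) = (1−x₁, 1−x₂). -/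
open Set

/-- The map `h`. -/
noncomputable def hfun (u : ℝ) : ℝ :=
  if Int.fract (u + 1/2) = 0 then (0:ℝ) else ((⌊u + 1/2⌋ : ℤ) : ℝ)

/-- The map `G_{ϱ,ε}` (symmetric three-cluster distribution `(ϱ, 1-2ϱ, ϱ)`). -/
noncomputable def Gmap (ϱ ε : ℝ) (x : Fin 2 → ℝ) : Fin 2 → ℝ := fun i =>
  2*(1-ε)*x i + 2*ε*((1-ϱ)*hfun (x i) + ϱ*(hfun (x 0 + x 1) - hfun (x (1-i)))) - hfun (x i)

/-- The open unit square `(0,1)²`. -/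
def cube2 : Set (Fin 2 → ℝ) := {x | ∀ i, 0 < x i ∧ x i < 1}

/-- The atom `A_ω` with label `ω = (h(x₁), h(x₂), h(x₁+x₂))`. -/
noncomputable def Atom2 (ω : ℤ × ℤ × ℤ) : Set (Fin 2 → ℝ) :=
  {x | x ∈ cube2 ∧ hfun (x 0) = (ω.1 : ℝ) ∧ hfun (x 1) = (ω.2.1 : ℝ) ∧
       hfun (x 0 + x 1) = (ω.2.2 : ℝ)}

/-- The symmetry `σ₃₂₁(x) = (1-x₂, 1-x₁)`. -/
def sigma321 (x : Fin 2 → ℝ) : Fin 2 → ℝ := fun i => 1 - x (1 - i)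

/-- The symmetry `Σ(x) = (1-x₁, 1-x₂)`. -/
def SigMap2 (x : Fin 2 → ℝ) : Fin 2 → ℝ := fun i => 1 - x i

/-- Conditioning Problem 1 for a set `P`. -/
noncomputable def SolvesCP1 (ϱ ε : ℝ) (P : Set (Fin 2 → ℝ)) : Prop :=
  P.Nonempty ∧ P ⊆ cube2 ∧
  (∀ ω : ℤ × ℤ × ℤ, (P ∩ Atom2 ω).Nonempty ↔ ω = (0,0,1) ∨ ω = (0,1,1)) ∧
  Gmap ϱ ε '' (P ∩ Atom2 (0,0,1)) = sigma321 '' P ∧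
  Gmap ϱ ε '' (P ∩ Atom2 (0,1,1)) ⊆ P

/-- The coefficient matrix `α_a` with rows `(1,0), (0,1), (a,1), (1,a)`. -/
noncomputable def alphaA (a : ℝ) : Matrix (Fin 4) (Fin 2) ℝ := !![1,0; 0,1; a,1; 1,a]

/-- `r_ϱ = (1-2ϱε)/(3-2ε)`. -/
noncomputable def rRho (ϱ ε : ℝ) : ℝ := (1 - 2*ϱ*ε)/(3 - 2*ε)

/-- The explicit constraint matrix `m_a`. -/
noncomputable def mMat (ϱ ε a : ℝ) : CM 4 :=
  (![ε*(1-2*ϱ), rRho ϱ ε, ((1+a)/a)*(rRho ϱ ε + (a-1)*ε*(1-2*ϱ)), (1+a)*rRho ϱ ε],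
   ![rRho ϱ ε, 1 - 2*ε*(1-ϱ-ε*(1-2*ϱ)), (1+a)*rRho ϱ ε,
     ((1+a)/a)*(a*rRho ϱ ε + 2*(a-1)*(1-ε)^2*(1-2*rRho ϱ ε))])

/-- The union `U = P^{α_a}_{m_a} ∪ σ₃₂₁(P^{α_a}_{m_a})`. -/
noncomputable def Uset (ϱ ε a : ℝ) : Set (Fin 2 → ℝ) :=
  PolySet (alphaA a) (mMat ϱ ε a) ∪ sigma321 '' PolySet (alphaA a) (mMat ϱ ε a)

/-!
On `P` we have `x₁ < r_ϱ < 1/2`, so `h(x₁) = 0`, and `h(x₁ + x₂) = 1` since otherwise `P` would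
meet `A_000`. Moreover `P` misses the line `x₂ = 1/2`: there `x ∈ A_001`, and `G(x) = σ₃₂₁(p)`
would force `p₁ = ε(1-2ϱ)`, on the boundary of `P`. So `P` avoids the discontinuities of `h`,
where `h(n - u) = n - h(u)` makes `G` commute with `σ₃₂₁`; with `G(P) ⊆ P ∪ σ₃₂₁(P)` from
Conditioning Problem 1 this gives `G(U) ⊆ U`. Finally `x₁ < r_ϱ < x₂` on `P`, so `U` lies in the
half-plane `x₁ < x₂`, which `Σ` maps to `x₁ > x₂`.
-/

lemma floor_add_half_eq {n : ℤ} {u : ℝ} (h₁ : n - 1/2 < u) (h₂ : u < n + 1/2) :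
    ⌊u + 1/2⌋ = n :=
  Int.floor_eq_iff.2 ⟨by linarith, by linarith⟩

lemma fract_add_half_ne_zero {n : ℤ} {u : ℝ} (h₁ : n - 1/2 < u) (h₂ : u < n + 1/2) :
    Int.fract (u + 1/2) ≠ 0 := by
  rw [Int.fract, floor_add_half_eq h₁ h₂]
  intro h
  linarith

lemma hfun_eq_intCast {n : ℤ} {u : ℝ} (h₁ : n - 1/2 < u) (h₂ : u < n + 1/2) : hfun u = n := by
  rw [hfun, if_neg (fract_add_half_ne_zero h₁ h₂), floor_add_half_eq h₁ h₂]

lemma hfun_eq_zero {u : ℝ} (h₁ : -1/2 < u) (h₂ : u < 1/2) : hfun u = 0 := by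
  simpa using hfun_eq_intCast (n := 0) (by push_cast; linarith) (by push_cast; linarith)

lemma hfun_eq_one {u : ℝ} (h₁ : 1/2 < u) (h₂ : u < 3/2) : hfun u = 1 := by
  simpa using hfun_eq_intCast (n := 1) (by push_cast; linarith) (by push_cast; linarith)

lemma hfun_half : hfun (1/2) = 0 := by
  norm_num [hfun]

lemma hfun_eq_zero_of_le_half {u : ℝ} (h₁ : -1/2 < u) (h₂ : u ≤ 1/2) : hfun u = 0 := by
  rcases h₂.lt_or_eq with h₂ | rfl
  · exact hfun_eq_zero h₁ h₂
  · exact hfun_half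

lemma hfun_intCast_sub (n : ℤ) {u : ℝ} (hu : Int.fract (u + 1/2) ≠ 0) :
    hfun (n - u) = n - hfun u := by
  set k := ⌊u + 1/2⌋
  have hk : (k : ℝ) < u + 1/2 := by
    have := (Int.fract_nonneg (u + 1/2)).lt_of_ne' hu
    rw [Int.fract] at this
    linarith
  have hk' : u + 1/2 < k + 1 := Int.lt_floor_add_one _
  rw [hfun_eq_intCast (n := n - k) (by push_cast; linarith) (by push_cast; linarith),
    hfun, if_neg hu]
  push_cast
  ring

lemma Gmap_apply_zero (ϱ ε : ℝ) (x : Fin 2 → ℝ) : Gmap ϱ ε x 0 =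
    2*(1-ε)*x 0 + 2*ε*((1-ϱ)*hfun (x 0) + ϱ*(hfun (x 0 + x 1) - hfun (x 1))) - hfun (x 0) :=
  rfl

lemma Gmap_apply_one (ϱ ε : ℝ) (x : Fin 2 → ℝ) : Gmap ϱ ε x 1 =
    2*(1-ε)*x 1 + 2*ε*((1-ϱ)*hfun (x 1) + ϱ*(hfun (x 0 + x 1) - hfun (x 0))) - hfun (x 1) :=
  rfl

lemma sigma321_apply_zero (x : Fin 2 → ℝ) : sigma321 x 0 = 1 - x 1 := rfl

lemma sigma321_apply_one (x : Fin 2 → ℝ) : sigma321 x 1 = 1 - x 0 := rfl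

lemma sigma321_involutive : Function.Involutive sigma321 := by
  intro x
  funext i
  fin_cases i <;> simp [sigma321]

lemma Gmap_sigma321 (ϱ ε : ℝ) {x : Fin 2 → ℝ} (h₀ : Int.fract (x 0 + 1/2) ≠ 0)
    (h₁ : Int.fract (x 1 + 1/2) ≠ 0) (hs : Int.fract (x 0 + x 1 + 1/2) ≠ 0) :
    Gmap ϱ ε (sigma321 x) = sigma321 (Gmap ϱ ε x) := by
  have e₀ : hfun (1 - x 0) = 1 - hfun (x 0) := by simpa using hfun_intCast_sub 1 h₀
  have e₁ : hfun (1 - x 1) = 1 - hfun (x 1) := by simpa using hfun_intCast_sub 1 h₁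
  have es : hfun (1 - x 1 + (1 - x 0)) = 2 - hfun (x 0 + x 1) := by
    rw [show 1 - x 1 + (1 - x 0) = ((2 : ℤ) : ℝ) - (x 0 + x 1) by push_cast; ring,
      hfun_intCast_sub 2 hs]
    norm_num
  funext i
  fin_cases i <;>
  · simp only [Gmap_apply_zero, Gmap_apply_one, sigma321_apply_zero, sigma321_apply_one,
      Fin.zero_eta, Fin.mk_one, e₀, e₁, es]
    ring

lemma image_union_image_subset_of_commute {α : Type*} {F σ : α → α} {P : Set α}
    (hσ : Function.Involutive σ) (hF : ∀ x ∈ P, F x ∈ P ∪ σ '' P)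
    (hcomm : ∀ x ∈ P, F (σ x) = σ (F x)) :
    F '' (P ∪ σ '' P) ⊆ P ∪ σ '' P := by
  rintro _ ⟨z, hz | ⟨x, hx, rfl⟩, rfl⟩
  · exact hF z hz
  · rw [hcomm x hx]
    rcases hF x hx with hFx | ⟨y, hy, hyx⟩
    · exact Or.inr ⟨_, hFx, rfl⟩
    · rw [← hyx, hσ]
      exact Or.inl hy

lemma SigMap2_image_inter_eq_empty {U : Set (Fin 2 → ℝ)} (hU : ∀ z ∈ U, z 0 < z 1) :
    SigMap2 '' U ∩ U = ∅ := by
  refine eq_empty_of_forall_notMem ?_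
  rintro _ ⟨⟨z, hz, rfl⟩, hz'⟩
  have := hU _ hz'
  simp only [SigMap2] at this
  linarith [hU z hz]

lemma coord_lt_on_union_image_sigma321 {P : Set (Fin 2 → ℝ)} (hP : ∀ x ∈ P, x 0 < x 1) :
    ∀ z ∈ P ∪ sigma321 '' P, z 0 < z 1 := by
  rintro _ (hz | ⟨x, hx, rfl⟩)
  · exact hP _ hz
  · rw [sigma321_apply_zero, sigma321_apply_one]
    linarith [hP x hx]

namespace SolvesCP1

variable {ϱ ε : ℝ} {P : Set (Fin 2 → ℝ)} {x : Fin 2 → ℝ}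

lemma half_lt_add (hP : SolvesCP1 ϱ ε P) (hx : x ∈ P) : 1/2 < x 0 + x 1 := by
  by_contra! hle
  have hc := hP.2.1 hx
  have h000 : (P ∩ Atom2 (0,0,0)).Nonempty :=
    ⟨x, hx, hc, by simpa using hfun_eq_zero (by linarith [(hc 0).1]) (by linarith [(hc 1).1]),
      by simpa using hfun_eq_zero (by linarith [(hc 1).1]) (by linarith [(hc 0).1]),
      by simpa using hfun_eq_zero_of_le_half (by linarith [(hc 0).1, (hc 1).1]) hle⟩
  simpa using (hP.2.2.1 _).1 h000

lemma coord_one_ne_half (hP : SolvesCP1 ϱ ε P) (hlow : ∀ p ∈ P, ε*(1-2*ϱ) < p 0)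
    (hx : x ∈ P) (hx0 : x 0 < 1/2) : x 1 ≠ 1/2 := by
  intro hx1
  have hc := hP.2.1 hx
  have h0 : hfun (x 0) = 0 := hfun_eq_zero (by linarith [(hc 0).1]) hx0
  have hs : hfun (x 0 + x 1) = 1 := hfun_eq_one (hP.half_lt_add hx) (by linarith)
  have hGx : Gmap ϱ ε x ∈ sigma321 '' P := hP.2.2.2.1 ▸
    ⟨x, ⟨hx, hc, by simpa using h0, by simpa [hx1] using hfun_half, by simpa using hs⟩, rfl⟩
  obtain ⟨p, hp, hpx⟩ := hGx
  have hp0 : p 0 = 1 - Gmap ϱ ε x 1 := by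
    rw [← hpx, sigma321_apply_one, sub_sub_cancel]
  have hG1 : Gmap ϱ ε x 1 = 1 - ε + 2*ε*ϱ := by
    rw [Gmap_apply_one, h0, hs, hx1, hfun_half]
    ring
  linarith [hlow p hp]

lemma Gmap_mem (hP : SolvesCP1 ϱ ε P) (hx : x ∈ P) (hx0 : x 0 < 1/2) (hx1 : x 1 ≠ 1/2) :
    Gmap ϱ ε x ∈ P ∪ sigma321 '' P := by
  have hc := hP.2.1 hx
  have h0 : hfun (x 0) = ((0 : ℤ) : ℝ) := by simpa using hfun_eq_zero (by linarith [(hc 0).1]) hx0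
  have hs : hfun (x 0 + x 1) = ((1 : ℤ) : ℝ) := by
    simpa using hfun_eq_one (hP.half_lt_add hx) (by linarith [(hc 1).2])
  rcases hx1.lt_or_gt with hlt | hgt
  · right
    rw [← hP.2.2.2.1]
    refine ⟨x, ⟨hx, hc, h0, ?_, hs⟩, rfl⟩
    simpa using hfun_eq_zero (by linarith [(hc 1).1]) hlt
  · left
    refine hP.2.2.2.2 ⟨x, ⟨hx, hc, h0, ?_, hs⟩, rfl⟩
    simpa using hfun_eq_one hgt (by linarith [(hc 1).2])

lemma Gmap_image_union_subset (hP : SolvesCP1 ϱ ε P)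
    (hbound : ∀ x ∈ P, ε*(1-2*ϱ) < x 0 ∧ x 0 < 1/2) :
    Gmap ϱ ε '' (P ∪ sigma321 '' P) ⊆ P ∪ sigma321 '' P := by
  have hx1 x (hx : x ∈ P) : x 1 ≠ 1/2 :=
    hP.coord_one_ne_half (fun p hp => (hbound p hp).1) hx (hbound x hx).2
  refine image_union_image_subset_of_commute sigma321_involutive
    (fun x hx => hP.Gmap_mem hx (hbound x hx).2 (hx1 x hx)) fun x hx => ?_
  have hc := hP.2.1 hx
  have hs := hP.half_lt_add hx
  have hx0 := (hbound x hx).2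
  refine Gmap_sigma321 ϱ ε ?_ ?_ ?_
  · exact fract_add_half_ne_zero (n := 0) (by push_cast; linarith [(hc 0).1])
      (by push_cast; linarith)
  · rcases (hx1 x hx).lt_or_gt with hlt | hgt
    · exact fract_add_half_ne_zero (n := 0) (by push_cast; linarith [(hc 1).1])
        (by push_cast; linarith)
    · exact fract_add_half_ne_zero (n := 1) (by push_cast; linarith)
        (by push_cast; linarith [(hc 1).2])
  · exact fract_add_half_ne_zero (n := 1) (by push_cast; linarith)
      (by push_cast; linarith [(hc 1).2])

end SolvesCP1

lemma rRho_lt_half {ϱ ε : ℝ} (hϱ : 0 < ϱ) (hε₀ : 0 < ε) (hε₁ : ε < 1/2) : rRho ϱ ε < 1/2 := by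
  rw [rRho, div_lt_iff₀ (by linarith)]
  nlinarith

lemma bounds_of_mem_PolySet_mMat {ϱ ε a : ℝ} {x : Fin 2 → ℝ}
    (hx : x ∈ PolySet (alphaA a) (mMat ϱ ε a)) :
    ε*(1-2*ϱ) < x 0 ∧ x 0 < rRho ϱ ε ∧ rRho ϱ ε < x 1 := by
  have h₀ := hx 0
  have h₁ := hx 1
  simp only [mMat, alphaA, Matrix.mulVec, dotProduct, Matrix.of_apply, Matrix.cons_val',
    Matrix.cons_val_zero, Matrix.cons_val_one, Matrix.cons_val_fin_one, Fin.sum_univ_two, one_mul,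
    zero_mul, add_zero, zero_add] at h₀ h₁
  exact ⟨h₀.1, h₀.2, h₁.1⟩

theorem statement_11_general (ϱ a ε : ℝ) (hϱ : ϱ ∈ Set.Ioo (0:ℝ) (1/2))
    (hε : ε ∈ Set.Ioo (0:ℝ) (1/2))
    (hsol : SolvesCP1 ϱ ε (PolySet (alphaA a) (mMat ϱ ε a))) :
    Gmap ϱ ε '' Uset ϱ ε a ⊆ Uset ϱ ε a ∧
    SigMap2 '' Uset ϱ ε a ∩ Uset ϱ ε a = ∅ := by
  have hr := rRho_lt_half hϱ.1 hε.1 hε.2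
  have hb x (hx : x ∈ PolySet (alphaA a) (mMat ϱ ε a)) := bounds_of_mem_PolySet_mMat hx
  refine ⟨hsol.Gmap_image_union_subset fun x hx => ⟨(hb x hx).1, (hb x hx).2.1.trans hr⟩,
    SigMap2_image_inter_eq_empty (coord_lt_on_union_image_sigma321 fun x hx => ?_)⟩
  exact (hb x hx).2.1.trans (hb x hx).2.2

/-- whenever `P^{α_a}_{m_a}` solves Conditioning Problem 1, the union
`U = P^{α_a}_{m_a} ∪ σ₃₂₁(P^{α_a}_{m_a})` is an AsIUP for `G_{ϱ,ε}`:
`G_{ϱ,ε}(U) ⊆ U` and `Σ(U) ∩ U = ∅`. -/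
theorem statement_11 (ϱ a ε : ℝ) (hϱ : ϱ ∈ Set.Ioo (0:ℝ) (1/2)) (ha : 1 < a)
    (hε : ε ∈ Set.Ioo (0:ℝ) (1/2))
    (hsol : SolvesCP1 ϱ ε (PolySet (alphaA a) (mMat ϱ ε a))) :
    Gmap ϱ ε '' Uset ϱ ε a ⊆ Uset ϱ ε a ∧
    SigMap2 '' Uset ϱ ε a ∩ Uset ϱ ε a = ∅ :=
  statement_11_general ϱ a ε hϱ hε hsol
end
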